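/- arXiv:1907.06624 — 3 statements merged into one kernel-verified Lean document; each statement's English description precedes it below -/
import Mathlib

section
/- Classical equivariance of the hybrid density operator: let η : ℝ²ⁿ → ℝ²ⁿ be a smooth diffeomorphism and φ : ℝ²ⁿ → ℝ a smooth function satisfying η*𝒜 + dφ = 𝒜, i.e. for every z ∈ ℝ²ⁿ and tangent vector v, 𝒜_{η(z)}(Dη(z)v) + Dφ(z)v = 𝒜_z(v), where 𝒜_z(δq,δp) := Σᵢ pᵢ δqⁱ. For smooth Υ : ℝ²ⁿ → ℂᵏ define (UΥ)(z) := Υ(η⁻¹(z)) · exp(−i φ(η⁻¹(z))/ħ). Then for every z ∈ ℝ²ⁿ, 𝒟̂(UΥ)(z) = 𝒟̂(Υ)(η⁻¹(z)); that is, the hybrid density operator of the transformed wavefunction is the pushforward of the original one by η (the Jacobian factor being 1 since η is symplectic). -/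
open Complex

noncomputable section

/-- Classical phase space `T*Q = ℝⁿ × ℝⁿ` with coordinates `z = (q, p)`. -/
abbrev PS (n : ℕ) := (Fin n → ℝ) × (Fin n → ℝ)

variable {n : ℕ}

/-- Partial derivative `∂f/∂qⁱ` of a complex-valued function on phase space. -/
noncomputable def dq (i : Fin n) (f : PS n → ℂ) (z : PS n) : ℂ :=
  fderiv ℝ f z (Pi.single i 1, 0)

/-- Partial derivative `∂f/∂pᵢ` of a complex-valued function on phase space. -/
noncomputable def dp (i : Fin n) (f : PS n → ℂ) (z : PS n) : ℂ :=
  fderiv ℝ f z (0, Pi.single i 1)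

/-- Partial derivative `∂f/∂qⁱ` of a real-valued function on phase space. -/
noncomputable def dqR (i : Fin n) (f : PS n → ℝ) (z : PS n) : ℝ :=
  fderiv ℝ f z (Pi.single i 1, 0)

/-- Partial derivative `∂f/∂pᵢ` of a real-valued function on phase space. -/
noncomputable def dpR (i : Fin n) (f : PS n → ℝ) (z : PS n) : ℝ :=
  fderiv ℝ f z (0, Pi.single i 1)

/-- Canonical Poisson bracket `{F,G} = Σᵢ (∂F/∂qⁱ ∂G/∂pᵢ − ∂F/∂pᵢ ∂G/∂qⁱ)`,
extended ℂ-bilinearly to complex-valued functions. -/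
noncomputable def pb (F G : PS n → ℂ) (z : PS n) : ℂ :=
  ∑ i, (dq i F z * dp i G z - dp i F z * dq i G z)

/-- Canonical Poisson bracket of real-valued functions. -/
noncomputable def pbR (F G : PS n → ℝ) (z : PS n) : ℝ :=
  ∑ i, (dqR i F z * dpR i G z - dpR i F z * dqR i G z)

variable {k : ℕ}

/-- The (finite-dimensional quantum sector) hybrid density operator, encoded
entrywise: `𝒟̂(Υ)(z) = ΥΥ* + Σᵢ ∂_{pᵢ}(pᵢ ΥΥ*) + iℏ Σᵢ (∂_{qⁱ}Υ ∂_{pᵢ}Υ* − ∂_{pᵢ}Υ ∂_{qⁱ}Υ*)`. -/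
noncomputable def Dhat (ℏ : ℝ) (Υ : PS n → Fin k → ℂ) (z : PS n) (a b : Fin k) : ℂ :=
  Υ z a * (starRingEnd ℂ) (Υ z b)
    + ∑ i, dp i (fun w => (w.2 i : ℂ) * (Υ w a * (starRingEnd ℂ) (Υ w b))) z
    + Complex.I * ℏ *
        ∑ i, (dq i (fun w => Υ w a) z * (starRingEnd ℂ) (dp i (fun w => Υ w b) z)
          - dp i (fun w => Υ w a) z * (starRingEnd ℂ) (dq i (fun w => Υ w b) z))

/-- The canonical one-form `𝒜_z(δq, δp) = Σᵢ pᵢ δqⁱ` on phase space. -/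
noncomputable def Acan (z v : PS n) : ℝ := ∑ i, z.2 i * v.1 i

/-! Write `G = Υ_a Υ_b*`. The density is `(n + 1) G + dG(p ∂_p) + iℏ P(dΥ_a, dΥ_b*)`, with `P`
the Poisson bivector. The phase `e^{-iφ/ℏ}` leaves `G` unchanged and adds `dG(X_φ)` to the bracket
term, `X_φ = sharp dφ` being the Hamiltonian vector of `φ`. Composing with `η⁻¹`, whose
differential is symplectic, leaves the bracket term invariant and changes the Liouville term by
`dG(Dη⁻¹ (p ∂_p) - p ∂_p)`. Since `𝒜 = ω(·, p ∂_p)`, the contact equation `η*𝒜 + dφ = 𝒜` says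
exactly that `Dη⁻¹ (p ∂_p) + X_φ = p ∂_p`, so the two corrections cancel. That `η` is symplectic
follows by applying `d` to the contact equation: `η*(d𝒜) = d𝒜` because `d dφ = 0`. -/

theorem fderiv_apply_fderiv_of_leftInverse {𝕜 E F : Type*} [NontriviallyNormedField 𝕜]
    [NormedAddCommGroup E] [NormedSpace 𝕜 E] [NormedAddCommGroup F] [NormedSpace 𝕜 F]
    {f : F → E} {g : E → F} {x : E} (hfg : Function.LeftInverse f g)
    (hf : DifferentiableAt 𝕜 f (g x)) (hg : DifferentiableAt 𝕜 g x) (v : E) :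
    fderiv 𝕜 f (g x) (fderiv 𝕜 g x v) = v := by
  have h := hf.hasFDerivAt.comp x hg.hasFDerivAt
  rw [show f ∘ g = id from funext hfg] at h
  exact congr($(h.unique (hasFDerivAt_id x)) v)

section LinearSymplecticAlgebra

open ContinuousLinearMap ComplexConjugate

def symplecticForm (u v : PS n) : ℝ := ∑ i, (u.1 i * v.2 i - u.2 i * v.1 i)

/-- The Liouville vector field `Σᵢ pᵢ ∂_{pᵢ}` at `z`. -/
def liouville (z : PS n) : PS n := (0, z.2)

def sharp (ξ : PS n →L[ℝ] ℝ) : PS n :=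
  (fun i => -ξ (0, Pi.single i 1), fun i => ξ (Pi.single i 1, 0))

theorem apply_eq_sum_coords {F : Type*} [NormedAddCommGroup F] [NormedSpace ℝ F]
    (L : PS n →L[ℝ] F) (v : PS n) :
    L v = ∑ i, v.1 i • L (Pi.single i 1, 0) + ∑ i, v.2 i • L (0, Pi.single i 1) := by
  have hv : v = ∑ i, v.1 i • ((Pi.single i 1, 0) : PS n) + ∑ i, v.2 i • (0, Pi.single i 1) := by
    ext <;> simp [Prod.fst_sum, Prod.snd_sum, ← Pi.single_smul, Finset.univ_sum_single]
  conv_lhs => rw [hv]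
  simp only [map_add, map_sum, map_smul]

theorem symplecticForm_add_right (u v w : PS n) :
    symplecticForm u (v + w) = symplecticForm u v + symplecticForm u w := by
  simp only [symplecticForm, ← Finset.sum_add_distrib, Prod.fst_add, Prod.snd_add, Pi.add_apply]
  exact Finset.sum_congr rfl fun _ _ => by ring

theorem symplecticForm_sharp (v : PS n) (ξ : PS n →L[ℝ] ℝ) :
    symplecticForm v (sharp ξ) = ξ v := by
  rw [apply_eq_sum_coords ξ v, symplecticForm, ← Finset.sum_add_distrib]
  exact Finset.sum_congr rfl fun _ _ => by simp [sharp]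

theorem symplecticForm_liouville (u x : PS n) : symplecticForm u (liouville x) = Acan x u := by
  simp [symplecticForm, liouville, Acan, mul_comm]

theorem eq_of_symplecticForm_eq {x y : PS n} (h : ∀ u, symplecticForm u x = symplecticForm u y) :
    x = y := by
  ext i
  · simpa [symplecticForm, Pi.single_apply] using h (0, Pi.single i 1)
  · simpa [symplecticForm, Pi.single_apply] using h (Pi.single i 1, 0)

section SymplecticMap

variable {T : PS n →L[ℝ] PS n} (hT : ∀ u v, symplecticForm (T u) (T v) = symplecticForm u v)
include hT

theorem sharp_comp (hT_surj : Function.Surjective T) (ξ : PS n →L[ℝ] ℝ) :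
    T (sharp (ξ ∘L T)) = sharp ξ := by
  refine eq_of_symplecticForm_eq fun u => ?_
  obtain ⟨u, rfl⟩ := hT_surj u
  rw [hT, symplecticForm_sharp, symplecticForm_sharp, comp_apply]

theorem liouville_add_sharp_of_contact {S : PS n →L[ℝ] PS n} (hTS : ∀ v, T (S v) = v)
    {z w : PS n} {ξ : PS n →L[ℝ] ℝ} (hcontact : ∀ u, Acan z (S u) + ξ u = Acan w u) :
    T (liouville z) + sharp ξ = liouville w := by
  refine eq_of_symplecticForm_eq fun u => ?_
  rw [symplecticForm_add_right, symplecticForm_sharp, symplecticForm_liouville, ← hcontact,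
    ← symplecticForm_liouville (S u), ← hT (S u), hTS]

end SymplecticMap

def poissonPairing : (PS n →L[ℝ] ℂ) →ₗ[ℂ] (PS n →L[ℝ] ℂ) →ₗ[ℂ] ℂ :=
  LinearMap.mk₂ ℂ
    (fun L M => ∑ i, (L (Pi.single i 1, 0) * M (0, Pi.single i 1)
      - L (0, Pi.single i 1) * M (Pi.single i 1, 0)))
    (fun _ _ _ => by simp only [add_apply, ← Finset.sum_add_distrib]; congr! 1; ring)
    (fun _ _ _ => by simp only [smul_apply, smul_eq_mul, Finset.mul_sum]; congr! 1; ring)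
    (fun _ _ _ => by simp only [add_apply, ← Finset.sum_add_distrib]; congr! 1; ring)
    (fun _ _ _ => by simp only [smul_apply, smul_eq_mul, Finset.mul_sum]; congr! 1; ring)

theorem poissonPairing_apply (L M : PS n →L[ℝ] ℂ) :
    poissonPairing L M = ∑ i, (L (Pi.single i 1, 0) * M (0, Pi.single i 1)
      - L (0, Pi.single i 1) * M (Pi.single i 1, 0)) := rfl

theorem poissonPairing_swap (L M : PS n →L[ℝ] ℂ) :
    poissonPairing M L = -poissonPairing L M := by
  simp only [poissonPairing_apply, ← Finset.sum_neg_distrib]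
  congr! 1; ring

theorem poissonPairing_self (L : PS n →L[ℝ] ℂ) : poissonPairing L L = 0 := by
  simp [poissonPairing_apply, mul_comm]

theorem poissonPairing_ofReal_left (ξ : PS n →L[ℝ] ℝ) (M : PS n →L[ℝ] ℂ) :
    poissonPairing (ofRealCLM ∘L ξ) M = M (sharp ξ) := by
  rw [poissonPairing_apply, apply_eq_sum_coords M, ← Finset.sum_add_distrib]
  refine Finset.sum_congr rfl fun _ _ => ?_
  simp [sharp, Complex.real_smul]
  ring

theorem poissonPairing_eq_sharp_re_add_sharp_im (L M : PS n →L[ℝ] ℂ) :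
    poissonPairing L M = M (sharp (reCLM ∘L L)) + I * M (sharp (imCLM ∘L L)) := by
  have hL : L = ofRealCLM ∘L (reCLM ∘L L) + I • (ofRealCLM ∘L (imCLM ∘L L)) := by
    refine ContinuousLinearMap.ext fun v => ?_
    simp [mul_comm I, re_add_im]
  conv_lhs => rw [hL]
  rw [map_add, map_smul, LinearMap.add_apply, LinearMap.smul_apply, poissonPairing_ofReal_left,
    poissonPairing_ofReal_left, smul_eq_mul]

theorem poissonPairing_comp {T : PS n →L[ℝ] PS n}
    (hT : ∀ u v, symplecticForm (T u) (T v) = symplecticForm u v) (hT_surj : Function.Surjective T)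
    (L M : PS n →L[ℝ] ℂ) : poissonPairing (L ∘L T) (M ∘L T) = poissonPairing L M := by
  simp only [poissonPairing_eq_sharp_re_add_sharp_im, ← comp_assoc, comp_apply,
    sharp_comp hT hT_surj]

theorem poissonPairing_gauge {E c ya yb : ℂ} (hE : E * conj E = 1) (hc : conj c = -c)
    (La Lb : PS n →L[ℝ] ℂ) (ξ : PS n →L[ℝ] ℝ) :
    poissonPairing (E • (La + (c * ya) • (ofRealCLM ∘L ξ)))
        ((conjCLE : ℂ →L[ℝ] ℂ) ∘L (E • (Lb + (c * yb) • (ofRealCLM ∘L ξ))))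
      = poissonPairing La ((conjCLE : ℂ →L[ℝ] ℂ) ∘L Lb)
        + c * (ya * conj (Lb (sharp ξ)) + conj yb * La (sharp ξ)) := by
  have hconj : (conjCLE : ℂ →L[ℝ] ℂ) ∘L (E • (Lb + (c * yb) • (ofRealCLM ∘L ξ)))
      = conj E • ((conjCLE : ℂ →L[ℝ] ℂ) ∘L Lb + (conj c * conj yb) • (ofRealCLM ∘L ξ)) := by
    refine ContinuousLinearMap.ext fun v => ?_
    simp
  rw [hconj]
  simp only [map_add, map_smul, LinearMap.add_apply, LinearMap.smul_apply, smul_eq_mul]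
  rw [poissonPairing_swap (ofRealCLM ∘L ξ) La, poissonPairing_ofReal_left,
    poissonPairing_ofReal_left, poissonPairing_self, comp_apply, ContinuousLinearEquiv.coe_coe,
    conjCLE_apply]
  linear_combination (poissonPairing La ((conjCLE : ℂ →L[ℝ] ℂ) ∘L Lb)
      + c * ya * conj (Lb (sharp ξ)) + c * conj yb * La (sharp ξ)) * hE
    - (E * conj E * conj yb * La (sharp ξ)) * hc

end LinearSymplecticAlgebra

section ContactTransformation

open ContinuousLinearMap ContinuousAlternatingMap

def acanCLM : PS n →L[ℝ] PS n →L[ℝ] ℝ :=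
  ∑ i, (ContinuousLinearMap.mul ℝ ℝ).bilinearComp (proj i ∘L snd ℝ _ _) (proj i ∘L fst ℝ _ _)

theorem acanCLM_apply (z v : PS n) : acanCLM z v = Acan z v := by
  simp [acanCLM, Acan, bilinearComp_apply]

def canonicalOneForm (z : PS n) : PS n [⋀^Fin 1]→L[ℝ] ℝ :=
  ofSubsingleton ℝ (PS n) ℝ 0 (acanCLM z)

theorem differentiable_canonicalOneForm : Differentiable ℝ (canonicalOneForm (n := n)) :=
  ((ofSubsingletonLIE (𝕜 := ℝ) (E := PS n) (F := ℝ) (0 : Fin 1)).toContinuousLinearMap.comp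
    acanCLM).differentiable

theorem extDeriv_canonicalOneForm (z u v : PS n) :
    extDeriv canonicalOneForm z ![u, v] = -symplecticForm u v := by
  have hlin (w : PS n) : fderiv ℝ (fun x => Acan x w) z = acanCLM.flip w := by
    simp_rw [← acanCLM_apply]
    exact (acanCLM.flip w).fderiv
  rw [extDeriv_apply (differentiable_canonicalOneForm z)]
  simp [Fin.sum_univ_two, canonicalOneForm, hlin, Fin.removeNth, acanCLM_apply]
  simp only [Acan, symplecticForm, Finset.sum_sub_distrib, mul_comm (v.2 _)]
  ring

theorem symplecticForm_fderiv_of_contact {η : PS n → PS n} {φ : PS n → ℝ}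
    (hη : ContDiff ℝ 2 η) (hφ : ContDiff ℝ 2 φ)
    (hcontact : ∀ z v, Acan (η z) (fderiv ℝ η z v) + fderiv ℝ φ z v = Acan z v) (w u v : PS n) :
    symplecticForm (fderiv ℝ η w u) (fderiv ℝ η w v) = symplecticForm u v := by
  set φ₀ : PS n → PS n [⋀^Fin 0]→L[ℝ] ℝ := fun x => constOfIsEmpty ℝ (PS n) (Fin 0) (φ x)
  have hdφ : extDeriv φ₀ = fun x => ofSubsingleton ℝ (PS n) ℝ (0 : Fin 1) (fderiv ℝ φ x) :=
    funext (extDeriv_constOfIsEmpty φ)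
  have hpull : (fun x => (canonicalOneForm (η x)).compContinuousLinearMap (fderiv ℝ η x))
      + extDeriv φ₀ = canonicalOneForm := by
    funext x
    ext v
    simp [hdφ, canonicalOneForm, acanCLM_apply, hcontact x (v 0)]
  have hφ₀ : ContDiff ℝ 2 φ₀ :=
    (constOfIsEmptyLIE ℝ (PS n) ℝ (Fin 0)).toContinuousLinearMap.contDiff.comp hφ
  have hdφ₀ : Differentiable ℝ (extDeriv φ₀) := by
    rw [hdφ]
    exact ((ofSubsingletonLIE (𝕜 := ℝ) (E := PS n) (F := ℝ) (0 : Fin 1)).toContinuousLinearMap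
      |>.differentiable.comp ((hφ.fderiv_right (m := 1) le_rfl).differentiable one_ne_zero))
  have hpull_diff : Differentiable ℝ
      fun x => (canonicalOneForm (η x)).compContinuousLinearMap (fderiv ℝ η x) := by
    rw [eq_sub_of_add_eq hpull]
    exact differentiable_canonicalOneForm.sub hdφ₀
  have hd : extDeriv canonicalOneForm w
      = (extDeriv canonicalOneForm (η w)).compContinuousLinearMap (fderiv ℝ η w) := by
    nth_rewrite 1 [← hpull]
    rw [extDeriv_add (hpull_diff w) (hdφ₀ w),
      extDeriv_pullback (differentiable_canonicalOneForm _) hη.contDiffAt (by simp),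
      extDeriv_extDeriv_apply hφ₀.contDiffAt (by simp), add_zero]
  have hvec : fderiv ℝ η w ∘ ![u, v] = ![fderiv ℝ η w u, fderiv ℝ η w v] := by
    ext i : 1
    fin_cases i <;> rfl
  have := congr($hd ![u, v])
  rwa [compContinuousLinearMap_apply, hvec, extDeriv_canonicalOneForm,
    extDeriv_canonicalOneForm, neg_inj, eq_comm] at this

end ContactTransformation

section HybridDensity

open ContinuousLinearMap ComplexConjugate

def outerEntry (Υ : PS n → Fin k → ℂ) (a b : Fin k) (w : PS n) : ℂ := Υ w a * conj (Υ w b)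

def gaugeTransform (ℏ : ℝ) (φ : PS n → ℝ) (Υ : PS n → Fin k → ℂ) (w : PS n) (c : Fin k) : ℂ :=
  Υ w c * exp (-(I * φ w / ℏ))

theorem sum_dp_coord_mul {f : PS n → ℂ} {z : PS n} (hf : DifferentiableAt ℝ f z) :
    ∑ i, dp i (fun w => (w.2 i : ℂ) * f w) z = n * f z + fderiv ℝ f z (liouville z) := by
  have hdp (i : Fin n) :
      dp i (fun w => (w.2 i : ℂ) * f w) z = f z + z.2 i • fderiv ℝ f z (0, Pi.single i 1) := by
    have hcoord : HasFDerivAt (fun w : PS n => (w.2 i : ℂ))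
        (ofRealCLM ∘L (proj i : (Fin n → ℝ) →L[ℝ] ℝ) ∘L snd ℝ (Fin n → ℝ) (Fin n → ℝ)) z :=
      (ofRealCLM ∘L (proj i : (Fin n → ℝ) →L[ℝ] ℝ) ∘L snd ℝ (Fin n → ℝ) (Fin n → ℝ)).hasFDerivAt
    rw [dp, (hcoord.fun_mul hf.hasFDerivAt).fderiv]
    simp [Complex.real_smul, add_comm]
  rw [Finset.sum_congr rfl fun i _ => hdp i, Finset.sum_add_distrib,
    apply_eq_sum_coords _ (liouville z)]
  simp [liouville]

theorem Dhat_eq (ℏ : ℝ) {Υ : PS n → Fin k → ℂ} {z : PS n} (hΥ : DifferentiableAt ℝ Υ z)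
    (a b : Fin k) :
    Dhat ℏ Υ z a b = (n + 1) * outerEntry Υ a b z + fderiv ℝ (outerEntry Υ a b) z (liouville z)
      + I * ℏ * poissonPairing (fderiv ℝ (fun w => Υ w a) z)
        ((conjCLE : ℂ →L[ℝ] ℂ) ∘L fderiv ℝ (fun w => Υ w b) z) := by
  have hG : DifferentiableAt ℝ (outerEntry Υ a b) z :=
    (differentiableAt_pi.1 hΥ a).mul ((differentiableAt_pi.1 hΥ b).star)
  have hsum := sum_dp_coord_mul hG
  simp only [outerEntry] at hsum
  rw [Dhat, hsum, poissonPairing_apply]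
  simp [dq, dp, outerEntry]
  ring

theorem fderiv_outerEntry_apply {Υ : PS n → Fin k → ℂ} {w : PS n} (hΥ : DifferentiableAt ℝ Υ w)
    (a b : Fin k) (v : PS n) :
    fderiv ℝ (outerEntry Υ a b) w v = Υ w a * conj (fderiv ℝ (fun y => Υ y b) w v)
      + conj (Υ w b) * fderiv ℝ (fun y => Υ y a) w v := by
  have hconj : HasFDerivAt (fun y => conj (Υ y b))
      ((conjCLE : ℂ →L[ℝ] ℂ) ∘L fderiv ℝ (fun y => Υ y b) w) w :=
    (conjCLE : ℂ →L[ℝ] ℂ).hasFDerivAt.comp w (differentiableAt_pi.1 hΥ b).hasFDerivAt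
  rw [show outerEntry Υ a b = fun y => Υ y a * conj (Υ y b) from rfl,
    ((differentiableAt_pi.1 hΥ a).hasFDerivAt.fun_mul hconj).fderiv]
  simp

theorem Dhat_comp (ℏ : ℝ) {ψ : PS n → PS n} {T : PS n →L[ℝ] PS n} {z : PS n}
    (hψ : HasFDerivAt ψ T z) (hT : ∀ u v, symplecticForm (T u) (T v) = symplecticForm u v)
    (hT_surj : Function.Surjective T) {Υ : PS n → Fin k → ℂ} (hΥ : DifferentiableAt ℝ Υ (ψ z))
    (a b : Fin k) :
    Dhat ℏ (fun w => Υ (ψ w)) z a b = Dhat ℏ Υ (ψ z) a b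
      + fderiv ℝ (outerEntry Υ a b) (ψ z) (T (liouville z) - liouville (ψ z)) := by
  have hcomp {f : PS n → ℂ} (hf : DifferentiableAt ℝ f (ψ z)) :
      fderiv ℝ (fun w => f (ψ w)) z = fderiv ℝ f (ψ z) ∘L T :=
    (hf.hasFDerivAt.comp z hψ).fderiv
  have hG : DifferentiableAt ℝ (outerEntry Υ a b) (ψ z) :=
    (differentiableAt_pi.1 hΥ a).mul ((differentiableAt_pi.1 hΥ b).star)
  rw [Dhat_eq (Υ := fun w => Υ (ψ w)) ℏ (hΥ.comp z hψ.differentiableAt), Dhat_eq ℏ hΥ,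
    show outerEntry (fun w => Υ (ψ w)) a b = fun w => outerEntry Υ a b (ψ w) from rfl,
    hcomp hG, hcomp (differentiableAt_pi.1 hΥ a), hcomp (differentiableAt_pi.1 hΥ b), ← comp_assoc,
    poissonPairing_comp hT hT_surj, comp_apply, map_sub]
  ring

theorem exp_neg_I_mul_div_mul_conj (r ℏ : ℝ) :
    exp (-(I * r / ℏ)) * conj (exp (-(I * r / ℏ))) = 1 := by
  rw [← exp_conj, ← exp_add, map_neg, map_div₀, map_mul, conj_I, conj_ofReal, conj_ofReal]
  rw [show _ + _ = (0 : ℂ) by ring, exp_zero]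

theorem outerEntry_gaugeTransform (ℏ : ℝ) (φ : PS n → ℝ) (Υ : PS n → Fin k → ℂ) (a b : Fin k) :
    outerEntry (gaugeTransform ℏ φ Υ) a b = outerEntry Υ a b := by
  funext w
  simp only [outerEntry, gaugeTransform, map_mul]
  linear_combination Υ w a * conj (Υ w b) * exp_neg_I_mul_div_mul_conj (φ w) ℏ

theorem hasFDerivAt_gaugeTransform (ℏ : ℝ) {φ : PS n → ℝ} {Υ : PS n → Fin k → ℂ} {w : PS n}
    {c : Fin k} {L : PS n →L[ℝ] ℂ} {ξ : PS n →L[ℝ] ℝ}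
    (hΥ : HasFDerivAt (fun y => Υ y c) L w) (hφ : HasFDerivAt φ ξ w) :
    HasFDerivAt (fun y => gaugeTransform ℏ φ Υ y c)
      (exp (-(I * φ w / ℏ)) • (L + (-(I / ℏ) * Υ w c) • (ofRealCLM ∘L ξ))) w := by
  have hexponent : HasFDerivAt (fun y => -(I * φ y / ℏ)) ((-(I / ℏ)) • (ofRealCLM ∘L ξ)) w := by
    have hfun : (fun y => -(I * φ y / ℏ)) = fun y => -(I / ℏ) * ofRealCLM (φ y) :=
      funext fun y => by rw [ofRealCLM_apply]; ring
    rw [hfun]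
    exact (ofRealCLM.hasFDerivAt.comp w hφ).const_mul (-(I / ℏ))
  refine (hΥ.fun_mul hexponent.cexp).congr_fderiv (ContinuousLinearMap.ext fun v => ?_)
  simp
  ring

theorem differentiableAt_gaugeTransform (ℏ : ℝ) {φ : PS n → ℝ} {Υ : PS n → Fin k → ℂ} {w : PS n}
    (hφ : DifferentiableAt ℝ φ w) (hΥ : DifferentiableAt ℝ Υ w) :
    DifferentiableAt ℝ (gaugeTransform ℏ φ Υ) w :=
  differentiableAt_pi.2 fun c => (hasFDerivAt_gaugeTransform ℏ
    (differentiableAt_pi.1 hΥ c).hasFDerivAt hφ.hasFDerivAt).differentiableAt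

theorem Dhat_gaugeTransform {ℏ : ℝ} (hℏ : ℏ ≠ 0) {φ : PS n → ℝ} {Υ : PS n → Fin k → ℂ} {w : PS n}
    (hφ : DifferentiableAt ℝ φ w) (hΥ : DifferentiableAt ℝ Υ w) (a b : Fin k) :
    Dhat ℏ (gaugeTransform ℏ φ Υ) w a b
      = Dhat ℏ Υ w a b + fderiv ℝ (outerEntry Υ a b) w (sharp (fderiv ℝ φ w)) := by
  have hder (c : Fin k) := hasFDerivAt_gaugeTransform ℏ (differentiableAt_pi.1 hΥ c).hasFDerivAt
    hφ.hasFDerivAt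
  have hc : conj (-(I / ℏ)) = -(-(I / ℏ) : ℂ) := by simp; ring
  have hIc : I * ℏ * (-(I / ℏ)) = 1 := by
    have : (ℏ : ℂ) ≠ 0 := ofReal_ne_zero.2 hℏ
    field_simp
    rw [I_sq, neg_neg]
  rw [Dhat_eq ℏ (differentiableAt_gaugeTransform ℏ hφ hΥ), Dhat_eq ℏ hΥ,
    outerEntry_gaugeTransform, (hder a).fderiv, (hder b).fderiv,
    poissonPairing_gauge (exp_neg_I_mul_div_mul_conj _ _) hc,
    fderiv_outerEntry_apply hΥ a b (sharp _)]
  linear_combination (Υ w a * conj (fderiv ℝ (fun y => Υ y b) w (sharp (fderiv ℝ φ w)))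
    + conj (Υ w b) * fderiv ℝ (fun y => Υ y a) w (sharp (fderiv ℝ φ w))) * hIc

end HybridDensity

/-- Classical equivariance of the hybrid density operator
under strict contact transformations: with `(UΥ)(z) = Υ(η⁻¹ z) exp(−iφ(η⁻¹ z)/ℏ)`,
one has `𝒟̂(UΥ)(z) = 𝒟̂(Υ)(η⁻¹ z)`. -/
theorem hybrid_density_contact_equivariance (n k : ℕ) (ℏ : ℝ) (hℏ : 0 < ℏ)
    (η ηinv : PS n → PS n)
    (hη : ContDiff ℝ (⊤ : ℕ∞) η) (hηinv : ContDiff ℝ (⊤ : ℕ∞) ηinv)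
    (hli : Function.LeftInverse ηinv η) (hri : Function.RightInverse ηinv η)
    (φ : PS n → ℝ) (hφ : ContDiff ℝ (⊤ : ℕ∞) φ)
    (hcontact : ∀ z v, Acan (η z) (fderiv ℝ η z v) + fderiv ℝ φ z v = Acan z v)
    (Υ : PS n → Fin k → ℂ) (hΥ : ContDiff ℝ (⊤ : ℕ∞) Υ) :
    ∀ (z : PS n) (a b : Fin k),
      Dhat ℏ (fun w c => Υ (ηinv w) c * Complex.exp (-(Complex.I * φ (ηinv w) / ℏ))) z a b
        = Dhat ℏ Υ (ηinv z) a b := by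
  intro z a b
  obtain ⟨w, rfl⟩ := hri.surjective z
  have hdη : Differentiable ℝ η := hη.differentiable (by simp)
  have hdηinv : Differentiable ℝ ηinv := hηinv.differentiable (by simp)
  set T := fderiv ℝ ηinv (η w)
  have hTS (v : PS n) : T (fderiv ℝ η w v) = v :=
    fderiv_apply_fderiv_of_leftInverse hli (hdηinv _) (hdη w) v
  have hST (v : PS n) : fderiv ℝ η w (T v) = v := by
    simpa only [hli w] using fderiv_apply_fderiv_of_leftInverse hri (hdη _) (hdηinv (η w)) v
  have hS := symplecticForm_fderiv_of_contact (hη.of_le (by norm_cast)) (hφ.of_le (by norm_cast))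
    hcontact w
  have hT (u v : PS n) : symplecticForm (T u) (T v) = symplecticForm u v := by
    rw [← hS, hST, hST]
  have hliouville : T (liouville (η w)) + sharp (fderiv ℝ φ w) = liouville w :=
    liouville_add_sharp_of_contact hT hTS (hcontact w)
  have hφw : DifferentiableAt ℝ φ w := hφ.differentiable (by simp) w
  have hΥw : DifferentiableAt ℝ Υ w := hΥ.differentiable (by simp) w
  rw [hli w]
  calc Dhat ℏ (fun y => gaugeTransform ℏ φ Υ (ηinv y)) (η w) a b
      = Dhat ℏ (gaugeTransform ℏ φ Υ) w a b
        + fderiv ℝ (outerEntry Υ a b) w (T (liouville (η w)) - liouville w) := by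
        rw [Dhat_comp ℏ (hdηinv (η w)).hasFDerivAt hT (fun v => ⟨_, hTS v⟩)
          (by rw [hli w]; exact differentiableAt_gaugeTransform ℏ hφw hΥw), hli w,
          outerEntry_gaugeTransform]
    _ = Dhat ℏ Υ w a b := by
        rw [Dhat_gaugeTransform hℏ.ne' hφw hΥw, add_assoc, ← map_add, ← hliouville]
        simp
end
end

section
/- Mean-field factorization in the absence of quantum–classical coupling: let m, M, ħ > 0, let V_C : ℝⁿ → ℝ and V_Q : ℝᵐ → ℝ be smooth, and set V(q,x) := V_C(q) + V_Q(x), H_C(q,p) := |p|²/(2M) + V_C(q), H_I(q,p,x) := |p|²/(2M) + V(q,x), L_I(q,p,x) := |p|²/(2M) − V(q,x). Suppose Ψ_C : ℝ × ℝ²ⁿ → ℂ is smooth and solves the Koopman–van Hove equation iħ ∂ₜΨ_C = iħ {H_C, Ψ_C} − (Σᵢ pᵢ ∂H_C/∂pᵢ − H_C) Ψ_C, and ψ_Q : ℝ × ℝᵐ → ℂ is smooth and solves the Schrödinger equation iħ ∂ₜψ_Q = −(ħ²/(2m)) Δₓψ_Q + V_Q ψ_Q. Then the product Υ(t,z,x)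 := Ψ_C(t,z) ψ_Q(t,x) solves the quantum–classical wave equation iħ ∂ₜΥ = −(L_I Υ + (ħ²/(2m)) ΔₓΥ) + iħ {H_I, Υ}. -/
open Complex

noncomputable section

variable {n : ℕ}

/-- Hybrid quantum–classical coordinate space `Γ = ℝ²ⁿ × ℝᵈ`. -/
abbrev Hyb (n d : ℕ) := PS n × (Fin d → ℝ)

variable {d : ℕ}

/-- `∂f/∂qⁱ` on the hybrid space (real-valued). -/
noncomputable def dqH (i : Fin n) (f : Hyb n d → ℝ) (w : Hyb n d) : ℝ :=
  fderiv ℝ f w ((Pi.single i 1, 0), 0)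

/-- `∂f/∂pᵢ` on the hybrid space (real-valued). -/
noncomputable def dpH (i : Fin n) (f : Hyb n d → ℝ) (w : Hyb n d) : ℝ :=
  fderiv ℝ f w ((0, Pi.single i 1), 0)

/-- `∂f/∂xᵏ` on the hybrid space (real-valued). -/
noncomputable def dxH (k : Fin d) (f : Hyb n d → ℝ) (w : Hyb n d) : ℝ :=
  fderiv ℝ f w (0, Pi.single k 1)

/-- Canonical Poisson bracket in the phase-space variables `z = (q,p)` only,
pointwise in the quantum coordinate `x`. -/
noncomputable def pbH (F G : Hyb n d → ℝ) (w : Hyb n d) : ℝ :=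
  ∑ i, (dqH i F w * dpH i G w - dpH i F w * dqH i G w)

/-- Laplacian `Δₓ` in the quantum variables `x` (real-valued). -/
noncomputable def laplxH (f : Hyb n d → ℝ) (w : Hyb n d) : ℝ :=
  ∑ k, dxH k (fun w' => dxH k f w') w

/-- `∂f/∂qⁱ` on the hybrid space (complex-valued). -/
noncomputable def dqHc (i : Fin n) (f : Hyb n d → ℂ) (w : Hyb n d) : ℂ :=
  fderiv ℝ f w ((Pi.single i 1, 0), 0)

/-- `∂f/∂pᵢ` on the hybrid space (complex-valued). -/
noncomputable def dpHc (i : Fin n) (f : Hyb n d → ℂ) (w : Hyb n d) : ℂ :=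
  fderiv ℝ f w ((0, Pi.single i 1), 0)

/-- `∂f/∂xᵏ` on the hybrid space (complex-valued). -/
noncomputable def dxHc (k : Fin d) (f : Hyb n d → ℂ) (w : Hyb n d) : ℂ :=
  fderiv ℝ f w (0, Pi.single k 1)

/-- Canonical Poisson bracket in the `z` variables only (complex-valued). -/
noncomputable def pbHc (F G : Hyb n d → ℂ) (w : Hyb n d) : ℂ :=
  ∑ i, (dqHc i F w * dpHc i G w - dpHc i F w * dqHc i G w)

/-- Laplacian `Δₓ` in the quantum variables `x` (complex-valued). -/
noncomputable def laplxHc (f : Hyb n d → ℂ) (w : Hyb n d) : ℂ :=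
  ∑ k, dxHc k (fun w' => dxHc k f w') w

/-- The classical-plus-interaction Hamiltonian `H_I(q,p,x) = |p|²/(2M) + V(q,x)`. -/
noncomputable def HI (M : ℝ) (V : (Fin n → ℝ) × (Fin d → ℝ) → ℝ) (w : Hyb n d) : ℝ :=
  (∑ i, w.1.2 i ^ 2) / (2 * M) + V (w.1.1, w.2)

/-- The classical-plus-interaction Lagrangian `L_I(q,p,x) = |p|²/(2M) − V(q,x)`. -/
noncomputable def LI (M : ℝ) (V : (Fin n → ℝ) × (Fin d → ℝ) → ℝ) (w : Hyb n d) : ℝ :=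
  (∑ i, w.1.2 i ^ 2) / (2 * M) - V (w.1.1, w.2)

/-- Spatial partial derivative `∂f/∂xᵏ` on the quantum configuration space. -/
noncomputable def dxc (k : Fin d) (f : (Fin d → ℝ) → ℂ) (x : Fin d → ℝ) : ℂ :=
  fderiv ℝ f x (Pi.single k 1)

/-- Laplacian on the quantum configuration space (complex-valued). -/
noncomputable def laplc (f : (Fin d → ℝ) → ℂ) (x : Fin d → ℝ) : ℂ :=
  ∑ k, dxc k (fun y => dxc k f y) x

/-!
The product `Υ = Ψ_C ψ_Q` separates the variables: its `z`-derivatives fall on `Ψ_C`, its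
`x`-derivatives on `ψ_Q`, and since `H_I = H_C(z) + V_Q(x)` the hybrid Poisson bracket
`{H_I, Υ}` is `{H_C, Ψ_C} ψ_Q`. The phase `Σᵢ pᵢ ∂H_C/∂pᵢ − H_C` of the Koopman–van Hove equation
is the classical Lagrangian `|p|²/(2M) − V_C`. Hence `ψ_Q` times the Koopman–van Hove equation
plus `Ψ_C` times the Schrödinger equation is the hybrid equation: the Lagrangian
`L_I = |p|²/(2M) − V_C − V_Q` collects both potentials.
-/

section SeparatedVariables

variable {E F G 𝔸 : Type*} [NormedAddCommGroup E] [NormedSpace ℝ E]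
  [NormedAddCommGroup F] [NormedSpace ℝ F] [NormedAddCommGroup G] [NormedSpace ℝ G]
  [NormedCommRing 𝔸] [NormedAlgebra ℝ 𝔸]

theorem fderiv_fst_add_snd_apply {a : E → G} {b : F → G} {x : E × F}
    (ha : DifferentiableAt ℝ a x.1) (hb : DifferentiableAt ℝ b x.2) (v : E × F) :
    fderiv ℝ (fun y : E × F => a y.1 + b y.2) x v = fderiv ℝ a x.1 v.1 + fderiv ℝ b x.2 v.2 := by
  have hab : HasFDerivAt (fun y : E × F => a y.1 + b y.2) _ x :=
    (ha.hasFDerivAt.comp x hasFDerivAt_fst).add (hb.hasFDerivAt.comp x hasFDerivAt_snd)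
  rw [hab.fderiv]
  rfl

theorem fderiv_fst_mul_snd_apply {f : E → 𝔸} {g : F → 𝔸} {x : E × F}
    (hf : DifferentiableAt ℝ f x.1) (hg : DifferentiableAt ℝ g x.2) (v : E × F) :
    fderiv ℝ (fun y : E × F => f y.1 * g y.2) x v
      = fderiv ℝ f x.1 v.1 * g x.2 + f x.1 * fderiv ℝ g x.2 v.2 := by
  have hfg : HasFDerivAt (fun y : E × F => f y.1 * g y.2) _ x :=
    (hf.hasFDerivAt.comp x hasFDerivAt_fst).mul (hg.hasFDerivAt.comp x hasFDerivAt_snd)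
  rw [hfg.fderiv]
  simp only [add_apply, smul_apply, smul_eq_mul,
    ContinuousLinearMap.comp_apply, ContinuousLinearMap.coe_fst', ContinuousLinearMap.coe_snd',
    Function.comp_apply]
  ring

end SeparatedVariables

section Hybrid

theorem dqHc_add {h : PS n → ℂ} {u : (Fin d → ℝ) → ℂ} {w : Hyb n d}
    (hh : DifferentiableAt ℝ h w.1) (hu : DifferentiableAt ℝ u w.2) (i : Fin n) :
    dqHc i (fun w' => h w'.1 + u w'.2) w = dq i h w.1 := by
  simp [dqHc, dq, fderiv_fst_add_snd_apply hh hu]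

theorem dpHc_add {h : PS n → ℂ} {u : (Fin d → ℝ) → ℂ} {w : Hyb n d}
    (hh : DifferentiableAt ℝ h w.1) (hu : DifferentiableAt ℝ u w.2) (i : Fin n) :
    dpHc i (fun w' => h w'.1 + u w'.2) w = dp i h w.1 := by
  simp [dpHc, dp, fderiv_fst_add_snd_apply hh hu]

theorem dqHc_mul {f : PS n → ℂ} {g : (Fin d → ℝ) → ℂ} {w : Hyb n d}
    (hf : DifferentiableAt ℝ f w.1) (hg : DifferentiableAt ℝ g w.2) (i : Fin n) :
    dqHc i (fun w' => f w'.1 * g w'.2) w = dq i f w.1 * g w.2 := by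
  simp [dqHc, dq, fderiv_fst_mul_snd_apply hf hg]

theorem dpHc_mul {f : PS n → ℂ} {g : (Fin d → ℝ) → ℂ} {w : Hyb n d}
    (hf : DifferentiableAt ℝ f w.1) (hg : DifferentiableAt ℝ g w.2) (i : Fin n) :
    dpHc i (fun w' => f w'.1 * g w'.2) w = dp i f w.1 * g w.2 := by
  simp [dpHc, dp, fderiv_fst_mul_snd_apply hf hg]

theorem dxHc_mul {f : PS n → ℂ} {g : (Fin d → ℝ) → ℂ} {w : Hyb n d}
    (hf : DifferentiableAt ℝ f w.1) (hg : DifferentiableAt ℝ g w.2) (k : Fin d) :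
    dxHc k (fun w' => f w'.1 * g w'.2) w = f w.1 * dxc k g w.2 := by
  simp [dxHc, dxc, fderiv_fst_mul_snd_apply hf hg]

theorem laplxHc_mul {f : PS n → ℂ} {g : (Fin d → ℝ) → ℂ} (hf : Differentiable ℝ f)
    (hg : ContDiff ℝ 2 g) (w : Hyb n d) :
    laplxHc (fun w' => f w'.1 * g w'.2) w = f w.1 * laplc g w.2 := by
  have hg' : ∀ k : Fin d, Differentiable ℝ (dxc k g) := fun k =>
    ((hg.fderiv_right (m := 1) le_rfl).differentiable one_ne_zero).clm_apply
      (differentiable_const _)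
  simp only [laplxHc, laplc, Finset.mul_sum]
  refine Finset.sum_congr rfl fun k _ => ?_
  simp only [dxHc_mul (hf _) ((hg.differentiable two_ne_zero) _)]
  exact dxHc_mul (hf w.1) (hg' k w.2) k

theorem pbHc_add_mul {h f : PS n → ℂ} {u g : (Fin d → ℝ) → ℂ} {w : Hyb n d}
    (hh : DifferentiableAt ℝ h w.1) (hu : DifferentiableAt ℝ u w.2)
    (hf : DifferentiableAt ℝ f w.1) (hg : DifferentiableAt ℝ g w.2) :
    pbHc (fun w' => h w'.1 + u w'.2) (fun w' => f w'.1 * g w'.2) w = pb h f w.1 * g w.2 := by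
  simp only [pbHc, pb, Finset.sum_mul, dqHc_add hh hu, dpHc_add hh hu, dqHc_mul hf hg,
    dpHc_mul hf hg]
  exact Finset.sum_congr rfl fun i _ => by ring

end Hybrid

section KoopmanVanHove

theorem fderiv_kineticEnergy_apply (M : ℝ) (p v : Fin n → ℝ) :
    fderiv ℝ (fun p : Fin n → ℝ => (∑ j, p j ^ 2) / (2 * M)) p v = (∑ j, p j * v j) / M := by
  have h : HasFDerivAt (fun y : Fin n → ℝ => ∑ j, y j ^ 2) _ p :=
    HasFDerivAt.fun_sum fun j _ => (hasFDerivAt_apply (𝕜 := ℝ) j p).pow 2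
  simp_rw [div_eq_mul_inv]
  rw [(h.mul_const (2 * M)⁻¹).fderiv]
  simp only [mul_inv_rev, Nat.add_one_sub_one, pow_one, nsmul_eq_mul, Nat.cast_ofNat, smul_apply,
    sum_apply, ContinuousLinearMap.proj_apply, smul_eq_mul, Finset.mul_sum, Finset.sum_mul]
  refine Finset.sum_congr rfl fun j _ => ?_
  ring

theorem dpR_kineticEnergy_add {M : ℝ} {VC : (Fin n → ℝ) → ℝ} (hVC : Differentiable ℝ VC)
    (z : PS n) (i : Fin n) :
    dpR i (fun w => (∑ j, w.2 j ^ 2) / (2 * M) + VC w.1) z = z.2 i / M := by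
  have hswap : (fun w : PS n => (∑ j, w.2 j ^ 2) / (2 * M) + VC w.1)
      = fun w => VC w.1 + (∑ j, w.2 j ^ 2) / (2 * M) := funext fun _ => add_comm _ _
  rw [dpR, hswap, fderiv_fst_add_snd_apply (b := fun p : Fin n → ℝ => (∑ j, p j ^ 2) / (2 * M))
    (hVC _) (by fun_prop), fderiv_kineticEnergy_apply]
  simp [Pi.single_apply]

theorem koopmanPhase_eq_lagrangian {M : ℝ} {VC : (Fin n → ℝ) → ℝ} (hVC : Differentiable ℝ VC)
    (z : PS n) :
    (∑ i, z.2 i * dpR i (fun w => (∑ j, w.2 j ^ 2) / (2 * M) + VC w.1) z)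
        - ((∑ i, z.2 i ^ 2) / (2 * M) + VC z.1)
      = (∑ i, z.2 i ^ 2) / (2 * M) - VC z.1 := by
  simp only [dpR_kineticEnergy_add hVC, ← mul_div_assoc, ← Finset.sum_div, ← sq]
  ring

end KoopmanVanHove

theorem meanfield_factorization_general (n d : ℕ) (m M ℏ : ℝ)
    (VC : (Fin n → ℝ) → ℝ) (hVC : ContDiff ℝ (⊤ : ℕ∞) VC)
    (VQ : (Fin d → ℝ) → ℝ) (hVQ : ContDiff ℝ (⊤ : ℕ∞) VQ)
    (ΨC : ℝ × PS n → ℂ) (hΨC : ContDiff ℝ (⊤ : ℕ∞) ΨC)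
    (ψQ : ℝ × (Fin d → ℝ) → ℂ) (hψQ : ContDiff ℝ (⊤ : ℕ∞) ψQ)
    (hKvH : ∀ (t : ℝ) (z : PS n),
      Complex.I * ℏ * deriv (fun s => ΨC (s, z)) t
        = Complex.I * ℏ *
            pb (fun w => (((∑ i, w.2 i ^ 2) / (2 * M) + VC w.1 : ℝ) : ℂ))
              (fun w => ΨC (t, w)) z
          - (((∑ i, z.2 i * dpR i (fun w => (∑ j, w.2 j ^ 2) / (2 * M) + VC w.1) z)
                - ((∑ i, z.2 i ^ 2) / (2 * M) + VC z.1) : ℝ) : ℂ) * ΨC (t, z))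
    (hSch : ∀ (t : ℝ) (x : Fin d → ℝ),
      Complex.I * ℏ * deriv (fun s => ψQ (s, x)) t
        = -(ℏ ^ 2 / (2 * m)) * laplc (fun y => ψQ (t, y)) x + (VQ x : ℂ) * ψQ (t, x)) :
    ∀ (t : ℝ) (w : Hyb n d),
      Complex.I * ℏ * deriv (fun s => ΨC (s, w.1) * ψQ (s, w.2)) t
        = -((LI M (fun qx => VC qx.1 + VQ qx.2) w : ℂ) * (ΨC (t, w.1) * ψQ (t, w.2))
              + (ℏ ^ 2 / (2 * m)) *
                  laplxHc (fun w' => ΨC (t, w'.1) * ψQ (t, w'.2)) w)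
          + Complex.I * ℏ *
              pbHc (fun w' => ((HI M (fun qx => VC qx.1 + VQ qx.2) w' : ℝ) : ℂ))
                (fun w' => ΨC (t, w'.1) * ψQ (t, w'.2)) w := by
  intro t w
  have hΨ : Differentiable ℝ ΨC := hΨC.differentiable (by simp)
  have hψ : Differentiable ℝ ψQ := hψQ.differentiable (by simp)
  have hVCd : Differentiable ℝ VC := hVC.differentiable (by simp)
  have hVQd : Differentiable ℝ VQ := hVQ.differentiable (by simp)
  have hΨt : Differentiable ℝ fun z => ΨC (t, z) := by fun_prop
  have hψt : ContDiff ℝ 2 fun x => ψQ (t, x) :=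
    (hψQ.comp (contDiff_const.prodMk contDiff_id)).of_le (WithTop.coe_le_coe.mpr le_top)
  have hHI : (fun w' => ((HI M (fun qx => VC qx.1 + VQ qx.2) w' : ℝ) : ℂ))
      = fun w' => (((∑ i, w'.1.2 i ^ 2) / (2 * M) + VC w'.1.1 : ℝ) : ℂ) + (VQ w'.2 : ℂ) := by
    funext w'
    simp only [HI]
    push_cast
    ring
  have hK := hKvH t w.1
  rw [koopmanPhase_eq_lagrangian hVCd] at hK
  rw [deriv_fun_mul (by fun_prop) (by fun_prop), laplxHc_mul hΨt hψt, hHI,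
    pbHc_add_mul (h := fun z => (((∑ i, z.2 i ^ 2) / (2 * M) + VC z.1 : ℝ) : ℂ))
      (u := fun x => (VQ x : ℂ)) (f := fun z => ΨC (t, z)) (g := fun x => ψQ (t, x))
      (by fun_prop) (by fun_prop) (hΨt _) (hψt.differentiable two_ne_zero _)]
  simp only [LI]
  push_cast at hK ⊢
  linear_combination ψQ (t, w.2) * hK + ΨC (t, w.1) * hSch t w.2

/-- Mean-field factorization in the absence of coupling: if
`Ψ_C` solves the Koopman–van Hove equation with `H_C = |p|²/(2M) + V_C(q)` and
`ψ_Q` solves the Schrödinger equation with potential `V_Q`, then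
`Υ = Ψ_C ψ_Q` solves the quantum–classical wave equation for
`V(q,x) = V_C(q) + V_Q(x)`. -/
theorem meanfield_factorization (n d : ℕ) (m M ℏ : ℝ) (hm : 0 < m) (hM : 0 < M) (hℏ : 0 < ℏ)
    (VC : (Fin n → ℝ) → ℝ) (hVC : ContDiff ℝ (⊤ : ℕ∞) VC)
    (VQ : (Fin d → ℝ) → ℝ) (hVQ : ContDiff ℝ (⊤ : ℕ∞) VQ)
    (ΨC : ℝ × PS n → ℂ) (hΨC : ContDiff ℝ (⊤ : ℕ∞) ΨC)
    (ψQ : ℝ × (Fin d → ℝ) → ℂ) (hψQ : ContDiff ℝ (⊤ : ℕ∞) ψQ)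
    (hKvH : ∀ (t : ℝ) (z : PS n),
      Complex.I * ℏ * deriv (fun s => ΨC (s, z)) t
        = Complex.I * ℏ *
            pb (fun w => (((∑ i, w.2 i ^ 2) / (2 * M) + VC w.1 : ℝ) : ℂ))
              (fun w => ΨC (t, w)) z
          - (((∑ i, z.2 i * dpR i (fun w => (∑ j, w.2 j ^ 2) / (2 * M) + VC w.1) z)
                - ((∑ i, z.2 i ^ 2) / (2 * M) + VC z.1) : ℝ) : ℂ) * ΨC (t, z))
    (hSch : ∀ (t : ℝ) (x : Fin d → ℝ),
      Complex.I * ℏ * deriv (fun s => ψQ (s, x)) t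
        = -(ℏ ^ 2 / (2 * m)) * laplc (fun y => ψQ (t, y)) x + (VQ x : ℂ) * ψQ (t, x)) :
    ∀ (t : ℝ) (w : Hyb n d),
      Complex.I * ℏ * deriv (fun s => ΨC (s, w.1) * ψQ (s, w.2)) t
        = -((LI M (fun qx => VC qx.1 + VQ qx.2) w : ℂ) * (ΨC (t, w.1) * ψQ (t, w.2))
              + (ℏ ^ 2 / (2 * m)) *
                  laplxHc (fun w' => ΨC (t, w'.1) * ψQ (t, w'.2)) w)
          + Complex.I * ℏ *
              pbHc (fun w' => ((HI M (fun qx => VC qx.1 + VQ qx.2) w' : ℝ) : ℂ))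
                (fun w' => ΨC (t, w'.1) * ψQ (t, w'.2)) w :=
  meanfield_factorization_general n d m M ℏ VC hVC VQ hVQ ΨC hΨC ψQ hψQ hKvH hSch
end
end

section
/- Hybrid density evolution without quantum kinetic energy: let H_I : ℝ²ⁿ × ℝᵐ → ℝ be smooth and set L_I := Σᵢ pᵢ ∂H_I/∂pᵢ − H_I. Suppose 𝒮, D : ℝ × (ℝ²ⁿ × ℝᵐ) → ℝ are smooth and satisfy ∂ₜ𝒮 = L_I + {H_I, 𝒮} and ∂ₜD = {H_I, D}, where the Poisson bracket is taken in the phase-space variables z = (q,p) only. Then the hybrid density 𝒟 := D + Σᵢ ∂_{pᵢ}(pᵢ D) + {D, 𝒮} satisfies the x-parameterized classical Liouville equation ∂ₜ𝒟 = {H_I, 𝒟}. -/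
open Complex

noncomputable section

variable {n : ℕ}

variable {d : ℕ}

/-!
Write `Σᵢ ∂_{pᵢ}(pᵢ F) = n F + E F`, where `E = Σᵢ pᵢ ∂_{pᵢ}` is the Euler operator in the momenta,
so that `L_I = E H_I - H_I`. Constant vector fields, `∂ₜ` among them, are derivations of the
bracket, and since the bracket lowers the degree in `p` by one,
`E{F,G} = {EF,G} + {F,EG} - {F,G}`. Differentiating `𝒟 = D + n D + E D + {D,𝒮}` in time and
inserting the two evolution equations, this identity turns `E{H,D} + {D,L_I}` into `{H,E D}`, and
the Jacobi identity turns `{{H,D},𝒮} + {D,{H,𝒮}}` into `{H,{D,𝒮}}`; what remains is `{H,𝒟}`.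
-/

open scoped ContDiff

section DirDeriv

variable {E : Type*} [NormedAddCommGroup E] [NormedSpace ℝ E]

def dirDeriv (v : E) (f : E → ℝ) : E → ℝ := fun x => fderiv ℝ f x v

variable {f g : E → ℝ}

theorem ContDiff.dirDeriv {k m : ℕ∞ω} (hf : ContDiff ℝ k f) (hmk : m + 1 ≤ k) (v : E) :
    ContDiff ℝ m (_root_.dirDeriv v f) :=
  (ContinuousLinearMap.apply ℝ ℝ v).contDiff.comp (hf.fderiv_right hmk)

theorem ContDiff.differentiable_dirDeriv (hf : ContDiff ℝ 2 f) (v : E) :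
    Differentiable ℝ (_root_.dirDeriv v f) :=
  (hf.dirDeriv (m := 1) (by norm_num) v).differentiable one_ne_zero

theorem dirDeriv_dirDeriv (hf : ContDiff ℝ 2 f) (u v : E) :
    dirDeriv u (dirDeriv v f) = fun x => fderiv ℝ (fderiv ℝ f) x u v := by
  ext x
  have hdf : DifferentiableAt ℝ (fderiv ℝ f) x :=
    (hf.fderiv_right (m := 1) (by norm_num)).differentiable one_ne_zero x
  change fderiv ℝ (fun y => fderiv ℝ f y v) x u = _
  rw [fderiv_clm_apply hdf (differentiableAt_const v)]
  simp

theorem dirDeriv_comm (hf : ContDiff ℝ 2 f) (u v : E) :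
    dirDeriv u (dirDeriv v f) = dirDeriv v (dirDeriv u f) := by
  rw [dirDeriv_dirDeriv hf, dirDeriv_dirDeriv hf]
  ext x
  exact hf.contDiffAt.isSymmSndFDerivAt (by simp [minSmoothness_of_isRCLikeNormedField]) u v

theorem dirDeriv_add (hf : Differentiable ℝ f) (hg : Differentiable ℝ g) (v : E) :
    dirDeriv v (f + g) = dirDeriv v f + dirDeriv v g := by
  ext x; simp [dirDeriv, fderiv_add (hf x) (hg x)]

theorem dirDeriv_sub (hf : Differentiable ℝ f) (hg : Differentiable ℝ g) (v : E) :
    dirDeriv v (f - g) = dirDeriv v f - dirDeriv v g := by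
  ext x; simp [dirDeriv, fderiv_sub (hf x) (hg x)]

theorem dirDeriv_const_smul (c : ℝ) (f : E → ℝ) (v : E) :
    dirDeriv v (c • f) = c • dirDeriv v f := by
  ext x; simp [dirDeriv, fderiv_const_smul_field]

theorem dirDeriv_mul (hf : Differentiable ℝ f) (hg : Differentiable ℝ g) (v : E) :
    dirDeriv v (f * g) = dirDeriv v f * g + f * dirDeriv v g := by
  ext x
  simp only [dirDeriv, fderiv_mul (hf x) (hg x), add_apply, smul_apply, smul_eq_mul, Pi.add_apply,
    Pi.mul_apply]
  ring

theorem dirDeriv_sum {ι : Type*} (s : Finset ι) {f : ι → E → ℝ}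
    (hf : ∀ i ∈ s, Differentiable ℝ (f i)) (v : E) :
    dirDeriv v (∑ i ∈ s, f i) = ∑ i ∈ s, dirDeriv v (f i) := by
  ext x; simp [dirDeriv, fderiv_sum fun i hi => hf i hi x]

theorem dirDeriv_continuousLinearMap (L : E →L[ℝ] ℝ) (v : E) :
    dirDeriv v L = fun _ => L v := by
  ext x; simp [dirDeriv, L.fderiv]

end DirDeriv

theorem sum_sum_eq_zero_of_antisymm {M ι : Type*} [AddCommGroup M] [IsAddTorsionFree M]
    [Fintype ι] {T : ι → ι → M} (hT : ∀ i j, T i j + T j i = 0) :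
    ∑ i, ∑ j, T i j = 0 := by
  have h2 : 2 • ∑ i, ∑ j, T i j = 0 := by
    rw [two_nsmul]
    nth_rw 2 [Finset.sum_comm]
    simp only [← Finset.sum_add_distrib, hT, Finset.sum_const_zero]
  exact (nsmul_right_inj two_ne_zero).mp (by rw [h2, smul_zero])

/-- Constant directions `qDir i = ∂/∂qⁱ` and `pDir i = ∂/∂pᵢ` in a normed space, with linear
momentum coordinates `mom i` dual to them. The space may have further directions (time, the
quantum coordinates `x`), along which the bracket does not differentiate. -/
structure CanonicalFrame (E : Type*) [NormedAddCommGroup E] [NormedSpace ℝ E] (n : ℕ) where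
  qDir : Fin n → E
  pDir : Fin n → E
  mom : Fin n → E →L[ℝ] ℝ
  mom_qDir : ∀ i j, mom i (qDir j) = 0
  mom_pDir : ∀ i j, mom i (pDir j) = if i = j then 1 else 0

namespace CanonicalFrame

variable {E : Type*} [NormedAddCommGroup E] [NormedSpace ℝ E] (Φ : CanonicalFrame E n)
variable {F G K : E → ℝ}

def poisson (F G : E → ℝ) : E → ℝ :=
  ∑ i, (dirDeriv (Φ.qDir i) F * dirDeriv (Φ.pDir i) G
    - dirDeriv (Φ.pDir i) F * dirDeriv (Φ.qDir i) G)

theorem poisson_antisymm (F G : E → ℝ) : Φ.poisson F G = -Φ.poisson G F := by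
  rw [poisson, poisson, ← Finset.sum_neg_distrib]
  exact Finset.sum_congr rfl fun i _ => by ring

theorem contDiff_poisson (hF : ContDiff ℝ ∞ F) (hG : ContDiff ℝ ∞ G) :
    ContDiff ℝ ∞ (Φ.poisson F G) := by
  have hd : ∀ {A : E → ℝ}, ContDiff ℝ ∞ A → ∀ v, ContDiff ℝ ∞ (dirDeriv v A) :=
    fun hA v => hA.dirDeriv (by norm_cast) v
  rw [poisson, Finset.sum_fn]
  exact ContDiff.sum fun i _ =>
    ((hd hF _).mul (hd hG _)).sub ((hd hF _).mul (hd hG _))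

theorem poisson_add_right (hG : Differentiable ℝ G) (hK : Differentiable ℝ K) :
    Φ.poisson F (G + K) = Φ.poisson F G + Φ.poisson F K := by
  simp only [poisson, dirDeriv_add hG hK, ← Finset.sum_add_distrib]
  exact Finset.sum_congr rfl fun i _ => by ring

theorem poisson_sub_right (hG : Differentiable ℝ G) (hK : Differentiable ℝ K) :
    Φ.poisson F (G - K) = Φ.poisson F G - Φ.poisson F K := by
  simp only [poisson, dirDeriv_sub hG hK, ← Finset.sum_sub_distrib]
  exact Finset.sum_congr rfl fun i _ => by ring

theorem poisson_smul_right (c : ℝ) (F G : E → ℝ) :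
    Φ.poisson F (c • G) = c • Φ.poisson F G := by
  simp only [poisson, dirDeriv_const_smul, Finset.smul_sum]
  exact Finset.sum_congr rfl fun i _ => by rw [smul_sub, mul_smul_comm, mul_smul_comm]

theorem poisson_neg_right (F G : E → ℝ) : Φ.poisson F (-G) = -Φ.poisson F G := by
  simpa using Φ.poisson_smul_right (-1) F G

theorem poisson_mul_right (hG : Differentiable ℝ G) (hK : Differentiable ℝ K) :
    Φ.poisson F (G * K) = Φ.poisson F G * K + G * Φ.poisson F K := by
  simp only [poisson, dirDeriv_mul hG hK, Finset.sum_mul, Finset.mul_sum,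
    ← Finset.sum_add_distrib]
  exact Finset.sum_congr rfl fun i _ => by ring

theorem poisson_sum_right {ι : Type*} (s : Finset ι) {G : ι → E → ℝ}
    (hG : ∀ j ∈ s, Differentiable ℝ (G j)) :
    Φ.poisson F (∑ j ∈ s, G j) = ∑ j ∈ s, Φ.poisson F (G j) := by
  simp only [poisson, dirDeriv_sum s hG, Finset.mul_sum, ← Finset.sum_sub_distrib]
  exact Finset.sum_comm

theorem poisson_mom_right (F : E → ℝ) (j : Fin n) :
    Φ.poisson F (Φ.mom j) = dirDeriv (Φ.qDir j) F := by
  ext x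
  simp [poisson, dirDeriv_continuousLinearMap, Φ.mom_qDir, Φ.mom_pDir]

theorem dirDeriv_poisson (hF : ContDiff ℝ 2 F) (hG : ContDiff ℝ 2 G) (v : E) :
    dirDeriv v (Φ.poisson F G)
      = Φ.poisson (dirDeriv v F) G + Φ.poisson F (dirDeriv v G) := by
  have hF' := hF.differentiable_dirDeriv
  have hG' := hG.differentiable_dirDeriv
  rw [poisson, dirDeriv_sum _ fun i _ => ((hF' _).mul (hG' _)).sub ((hF' _).mul (hG' _))]
  simp only [poisson, ← Finset.sum_add_distrib]
  refine Finset.sum_congr rfl fun i _ => ?_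
  rw [dirDeriv_sub ((hF' _).mul (hG' _)) ((hF' _).mul (hG' _)), dirDeriv_mul (hF' _) (hG' _),
    dirDeriv_mul (hF' _) (hG' _), dirDeriv_comm hF v, dirDeriv_comm hF v, dirDeriv_comm hG v,
    dirDeriv_comm hG v]
  ring

theorem poisson_jacobi (hF : ContDiff ℝ 2 F) (hG : ContDiff ℝ 2 G) (hK : ContDiff ℝ 2 K) :
    Φ.poisson F (Φ.poisson G K) + Φ.poisson G (Φ.poisson K F) + Φ.poisson K (Φ.poisson F G)
      = 0 := by
  have expand : ∀ {A B C : E → ℝ}, ContDiff ℝ 2 B → ContDiff ℝ 2 C →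
      Φ.poisson A (Φ.poisson B C) = ∑ i, ∑ j,
        (dirDeriv (Φ.qDir i) A
            * (dirDeriv (Φ.qDir j) (dirDeriv (Φ.pDir i) B) * dirDeriv (Φ.pDir j) C
              - dirDeriv (Φ.pDir j) (dirDeriv (Φ.pDir i) B) * dirDeriv (Φ.qDir j) C
              + (dirDeriv (Φ.qDir j) B * dirDeriv (Φ.pDir j) (dirDeriv (Φ.pDir i) C)
              - dirDeriv (Φ.pDir j) B * dirDeriv (Φ.qDir j) (dirDeriv (Φ.pDir i) C)))
          - dirDeriv (Φ.pDir i) A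
            * (dirDeriv (Φ.qDir j) (dirDeriv (Φ.qDir i) B) * dirDeriv (Φ.pDir j) C
              - dirDeriv (Φ.pDir j) (dirDeriv (Φ.qDir i) B) * dirDeriv (Φ.qDir j) C
              + (dirDeriv (Φ.qDir j) B * dirDeriv (Φ.pDir j) (dirDeriv (Φ.qDir i) C)
              - dirDeriv (Φ.pDir j) B * dirDeriv (Φ.qDir j) (dirDeriv (Φ.qDir i) C)))) := by
    intro A B C hB hC
    rw [poisson.eq_1 Φ A]
    simp only [Φ.dirDeriv_poisson hB hC]
    simp only [poisson, ← Finset.sum_add_distrib, Finset.mul_sum, ← Finset.sum_sub_distrib]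
  rw [expand hG hK, expand hK hF, expand hF hG]
  simp only [← Finset.sum_add_distrib]
  -- once mixed partials are put in a normal order, the summand is antisymmetric in `(i, j)`
  refine sum_sum_eq_zero_of_antisymm fun i j => ?_
  simp only [dirDeriv_comm hF, dirDeriv_comm hG, dirDeriv_comm hK]
  ring

theorem poisson_poisson (hF : ContDiff ℝ 2 F) (hG : ContDiff ℝ 2 G) (hK : ContDiff ℝ 2 K) :
    Φ.poisson F (Φ.poisson G K)
      = Φ.poisson (Φ.poisson F G) K + Φ.poisson G (Φ.poisson F K) := by
  have h := Φ.poisson_jacobi hF hG hK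
  rw [Φ.poisson_antisymm K F, poisson_neg_right, Φ.poisson_antisymm K] at h
  linear_combination h

/-- The paper's `L_I` is `Φ.euler H_I - H_I`. -/
def euler (F : E → ℝ) : E → ℝ := ∑ i, ⇑(Φ.mom i) * dirDeriv (Φ.pDir i) F

theorem contDiff_euler (hF : ContDiff ℝ ∞ F) : ContDiff ℝ ∞ (Φ.euler F) := by
  rw [euler, Finset.sum_fn]
  exact ContDiff.sum fun i _ => (Φ.mom i).contDiff.mul (hF.dirDeriv (by norm_cast) _)

theorem poisson_euler_right (F : E → ℝ) (hG : ContDiff ℝ 2 G) :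
    Φ.poisson F (Φ.euler G)
      = ∑ j, (⇑(Φ.mom j) * Φ.poisson F (dirDeriv (Φ.pDir j) G)
        + dirDeriv (Φ.qDir j) F * dirDeriv (Φ.pDir j) G) := by
  rw [euler, Φ.poisson_sum_right _ fun j _ =>
    (Φ.mom j).differentiable.mul (hG.differentiable_dirDeriv _)]
  refine Finset.sum_congr rfl fun j _ => ?_
  rw [Φ.poisson_mul_right (Φ.mom j).differentiable (hG.differentiable_dirDeriv _),
    poisson_mom_right]
  ring

theorem euler_poisson (hF : ContDiff ℝ 2 F) (hG : ContDiff ℝ 2 G) :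
    Φ.euler (Φ.poisson F G)
      = Φ.poisson (Φ.euler F) G + Φ.poisson F (Φ.euler G) - Φ.poisson F G := by
  rw [Φ.poisson_antisymm (Φ.euler F), Φ.poisson_euler_right G hF, Φ.poisson_euler_right F hG,
    euler]
  simp only [Φ.dirDeriv_poisson hF hG]
  rw [poisson.eq_1 Φ F G]
  simp only [← Finset.sum_neg_distrib, ← Finset.sum_add_distrib, ← Finset.sum_sub_distrib]
  refine Finset.sum_congr rfl fun j _ => ?_
  rw [Φ.poisson_antisymm G]
  ring

theorem dirDeriv_euler (hF : ContDiff ℝ 2 F) {v : E} (hv : ∀ j, Φ.mom j v = 0) :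
    dirDeriv v (Φ.euler F) = Φ.euler (dirDeriv v F) := by
  rw [euler, euler, dirDeriv_sum _ fun j _ =>
    (Φ.mom j).differentiable.mul (hF.differentiable_dirDeriv _)]
  refine Finset.sum_congr rfl fun j _ => ?_
  rw [dirDeriv_mul (Φ.mom j).differentiable (hF.differentiable_dirDeriv _),
    dirDeriv_continuousLinearMap, hv, dirDeriv_comm hF]
  ext x
  simp

theorem sum_dirDeriv_pDir_mom_mul (hF : Differentiable ℝ F) :
    ∑ i, dirDeriv (Φ.pDir i) (⇑(Φ.mom i) * F) = (n : ℝ) • F + Φ.euler F := by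
  calc ∑ i, dirDeriv (Φ.pDir i) (⇑(Φ.mom i) * F)
      = ∑ i, (F + ⇑(Φ.mom i) * dirDeriv (Φ.pDir i) F) := by
        refine Finset.sum_congr rfl fun i _ => ?_
        rw [dirDeriv_mul (Φ.mom i).differentiable hF, dirDeriv_continuousLinearMap, Φ.mom_pDir]
        ext x
        simp
    _ = (n : ℝ) • F + Φ.euler F := by
        rw [Finset.sum_add_distrib, Finset.sum_const, Finset.card_univ, Fintype.card_fin,
          Nat.cast_smul_eq_nsmul, euler]

def hybridDensity (D S : E → ℝ) : E → ℝ :=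
  D + ∑ i, dirDeriv (Φ.pDir i) (⇑(Φ.mom i) * D) + Φ.poisson D S

theorem contDiff_hybridDensity {D S : E → ℝ} (hD : ContDiff ℝ ∞ D) (hS : ContDiff ℝ ∞ S) :
    ContDiff ℝ ∞ (Φ.hybridDensity D S) := by
  rw [hybridDensity, Φ.sum_dirDeriv_pDir_mom_mul (hD.differentiable (by norm_cast))]
  exact (hD.add ((hD.const_smul (n : ℝ)).add (Φ.contDiff_euler hD))).add
    (Φ.contDiff_poisson hD hS)

theorem dirDeriv_hybridDensity {H D S : E → ℝ} (hH : ContDiff ℝ ∞ H) (hD : ContDiff ℝ ∞ D)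
    (hS : ContDiff ℝ ∞ S) {τ : E} (hτ : ∀ j, Φ.mom j τ = 0)
    (hDt : dirDeriv τ D = Φ.poisson H D)
    (hSt : dirDeriv τ S = Φ.euler H - H + Φ.poisson H S) :
    dirDeriv τ (Φ.hybridDensity D S) = Φ.poisson H (Φ.hybridDensity D S) := by
  have c2 : ∀ {A : E → ℝ}, ContDiff ℝ ∞ A → ContDiff ℝ 2 A := fun hA => hA.of_le (by norm_cast)
  have c1 : ∀ {A : E → ℝ}, ContDiff ℝ ∞ A → Differentiable ℝ A :=
    fun hA => hA.differentiable (by norm_cast)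
  have dH := c1 hH
  have dD := c1 hD
  have dHS := c1 (Φ.contDiff_poisson hH hS)
  have dDS := c1 (Φ.contDiff_poisson hD hS)
  have dEH := c1 (Φ.contDiff_euler hH)
  have dED := c1 (Φ.contDiff_euler hD)
  rw [hybridDensity, Φ.sum_dirDeriv_pDir_mom_mul dD]
  simp (disch := fun_prop) only [dirDeriv_add, dirDeriv_const_smul, Φ.dirDeriv_euler (c2 hD) hτ,
    Φ.dirDeriv_poisson (c2 hD) (c2 hS), hDt, hSt, Φ.poisson_add_right, Φ.poisson_sub_right,
    Φ.poisson_smul_right, Φ.euler_poisson (c2 hH) (c2 hD),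
    Φ.poisson_poisson (c2 hH) (c2 hD) (c2 hS)]
  rw [Φ.poisson_antisymm D (Φ.euler H), Φ.poisson_antisymm D H]
  abel

end CanonicalFrame

section Slices

variable {F : Type*} [NormedAddCommGroup F] [NormedSpace ℝ F] {f : ℝ × F → ℝ}

theorem fderiv_prodMk_right_apply {t : ℝ} {w : F} (hf : DifferentiableAt ℝ f (t, w)) (v : F) :
    fderiv ℝ (fun y => f (t, y)) w v = dirDeriv (0, v) f (t, w) :=
  congrArg (· v) (hf.hasFDerivAt.comp w (hasFDerivAt_prodMk_right t w)).fderiv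

theorem deriv_prodMk_left {t : ℝ} {w : F} (hf : DifferentiableAt ℝ f (t, w)) :
    deriv (fun s => f (s, w)) t = dirDeriv (1, 0) f (t, w) := by
  rw [← fderiv_apply_one_eq_deriv]
  exact congrArg (· 1) (hf.hasFDerivAt.comp t (hasFDerivAt_prodMk_left (𝕜 := ℝ) t w)).fderiv

theorem dirDeriv_one_zero_eq_of_deriv {g : ℝ × F → ℝ} (hf : Differentiable ℝ f)
    (h : ∀ t w, deriv (fun s => f (s, w)) t = g (t, w)) : dirDeriv (1, 0) f = g := by
  ext ⟨t, w⟩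
  rw [← deriv_prodMk_left (hf _), h]

end Slices

def hybridFrame (n d : ℕ) : CanonicalFrame (ℝ × Hyb n d) n where
  qDir i := (0, ((Pi.single i 1, 0), 0))
  pDir i := (0, ((0, Pi.single i 1), 0))
  mom i := (ContinuousLinearMap.proj i).comp ((ContinuousLinearMap.snd ℝ _ _).comp
    ((ContinuousLinearMap.fst ℝ _ _).comp (ContinuousLinearMap.snd ℝ _ _)))
  mom_qDir i j := by simp
  mom_pDir i j := by simp [Pi.single_apply]

section HybridSlices

variable {f g : ℝ × Hyb n d → ℝ}

theorem dqH_slice (hf : Differentiable ℝ f) (i : Fin n) (t : ℝ) (w : Hyb n d) :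
    dqH i (fun w' => f (t, w')) w = dirDeriv ((hybridFrame n d).qDir i) f (t, w) :=
  fderiv_prodMk_right_apply (hf _) _

theorem dpH_slice (hf : Differentiable ℝ f) (i : Fin n) (t : ℝ) (w : Hyb n d) :
    dpH i (fun w' => f (t, w')) w = dirDeriv ((hybridFrame n d).pDir i) f (t, w) :=
  fderiv_prodMk_right_apply (hf _) _

theorem pbH_slice (hf : Differentiable ℝ f) (hg : Differentiable ℝ g) (t : ℝ) (w : Hyb n d) :
    pbH (fun w' => f (t, w')) (fun w' => g (t, w')) w
      = (hybridFrame n d).poisson f g (t, w) := by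
  simp only [pbH, CanonicalFrame.poisson, Finset.sum_apply, Pi.sub_apply, Pi.mul_apply,
    dqH_slice hf, dpH_slice hf, dqH_slice hg, dpH_slice hg]

theorem hybridDensity_slice (hf : Differentiable ℝ f) (hg : Differentiable ℝ g) (t : ℝ)
    (w : Hyb n d) :
    (hybridFrame n d).hybridDensity f g (t, w)
      = f (t, w) + ∑ i, dpH i (fun w' => w'.1.2 i * f (t, w')) w
        + pbH (fun w' => f (t, w')) (fun w' => g (t, w')) w := by
  rw [pbH_slice hf hg]
  simp only [CanonicalFrame.hybridDensity, Pi.add_apply, Finset.sum_apply]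
  congr 2
  refine Finset.sum_congr rfl fun i _ => ?_
  exact (dpH_slice (((hybridFrame n d).mom i).differentiable.mul hf) i t w).symm

theorem euler_lift_apply {H : Hyb n d → ℝ} (hH : Differentiable ℝ H) (t : ℝ) (w : Hyb n d) :
    (hybridFrame n d).euler (fun y => H y.2) (t, w) = ∑ i, w.1.2 i * dpH i H w := by
  simp only [CanonicalFrame.euler, Finset.sum_apply, Pi.mul_apply]
  refine Finset.sum_congr rfl fun i _ => ?_
  rw [← dpH_slice (f := fun y => H y.2) (hH.comp differentiable_snd)]
  rfl

end HybridSlices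

/-- Hybrid density evolution without quantum kinetic energy:
if `∂ₜ𝒮 = L_I + {H_I, 𝒮}` and `∂ₜD = {H_I, D}` (with `L_I = Σᵢ pᵢ ∂H_I/∂pᵢ − H_I`),
then `𝒟 := D + Σᵢ ∂_{pᵢ}(pᵢ D) + {D, 𝒮}` satisfies the `x`-parameterized
classical Liouville equation `∂ₜ𝒟 = {H_I, 𝒟}`. -/
theorem hybrid_density_liouville_no_kinetic (n d : ℕ)
    (HI : Hyb n d → ℝ) (hHI : ContDiff ℝ (⊤ : ℕ∞) HI)
    (𝒮 D : ℝ × Hyb n d → ℝ)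
    (h𝒮 : ContDiff ℝ (⊤ : ℕ∞) 𝒮) (hD : ContDiff ℝ (⊤ : ℕ∞) D)
    (h𝒮eq : ∀ (t : ℝ) (w : Hyb n d),
      deriv (fun s => 𝒮 (s, w)) t
        = ((∑ i, w.1.2 i * dpH i HI w) - HI w) + pbH HI (fun w' => 𝒮 (t, w')) w)
    (hDeq : ∀ (t : ℝ) (w : Hyb n d),
      deriv (fun s => D (s, w)) t = pbH HI (fun w' => D (t, w')) w) :
    ∀ (t : ℝ) (w : Hyb n d),
      deriv (fun s => D (s, w) + ∑ i, dpH i (fun w' => w'.1.2 i * D (s, w')) w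
          + pbH (fun w' => D (s, w')) (fun w' => 𝒮 (s, w')) w) t
        = pbH HI
            (fun w' => D (t, w') + ∑ i, dpH i (fun w'' => w''.1.2 i * D (t, w'')) w'
              + pbH (fun w'' => D (t, w'')) (fun w'' => 𝒮 (t, w'')) w') w := by
  intro t w
  let H : ℝ × Hyb n d → ℝ := fun y => HI y.2
  have hH : ContDiff ℝ ∞ H := hHI.comp contDiff_snd
  have c1 : ∀ {A : ℝ × Hyb n d → ℝ}, ContDiff ℝ ∞ A → Differentiable ℝ A :=
    fun hA => hA.differentiable (by norm_cast)
  have hDt : dirDeriv (1, 0) D = (hybridFrame n d).poisson H D :=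
    dirDeriv_one_zero_eq_of_deriv (c1 hD) fun s w =>
      (hDeq s w).trans (pbH_slice (c1 hH) (c1 hD) s w)
  have h𝒮t : dirDeriv (1, 0) 𝒮
      = (hybridFrame n d).euler H - H + (hybridFrame n d).poisson H 𝒮 :=
    dirDeriv_one_zero_eq_of_deriv (c1 h𝒮) fun s w => by
      rw [h𝒮eq, Pi.add_apply, Pi.sub_apply, euler_lift_apply (hHI.differentiable (by norm_cast)),
        pbH_slice (c1 hH) (c1 h𝒮)]
  have h𝒟 := (hybridFrame n d).contDiff_hybridDensity hD h𝒮
  simp only [← hybridDensity_slice (c1 hD) (c1 h𝒮)]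
  rw [deriv_prodMk_left (c1 h𝒟 _),
    (hybridFrame n d).dirDeriv_hybridDensity hH hD h𝒮 (fun j => by simp [hybridFrame]) hDt h𝒮t]
  exact (pbH_slice (c1 hH) (c1 h𝒟) t w).symm
end
end
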